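/- Let m be a positive integer, K a nonnegative integer, and ξ > 0. Then 1/(Γ(ξ))^m = C_{m,K} · (1/ξ^{mξ}) · ξ^{m + K/2 + 1/2 - 1} · e^{2^K m ξ} · 2^{(2(2^K - 1) - K) m ξ} · (∏_{j=2}^{m} ∫_0^1 ρ^{ξ + (j-1)/m - 1} (1-ρ)^{(m-j+1)/m - 1} dρ) · (∏_{k=1}^{K} ∫_0^∞ t^{2^{k-1} m ξ + 1/2 - 1} e^{-t·2^K m ξ} dt) · ((2^K m ξ)^{2^K m ξ - 1/2} / (Γ(2^K m ξ) e^{2^K m ξ})), where C_{m,K} = (2^K m / (2π))^{K/2} / ((2π)^{(m-1)/2} ∏_{j=2}^{m} Γ((m-j+1)/m)). -/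

import Mathlib

/-!
Each Beta integral equals `Γ(ξ + (j-1)/m) Γ((m-j+1)/m) / Γ(ξ + 1)`, and the product of the
numerators `Γ(ξ + (j-1)/m)` over `j` is Gauss's multiplication formula
`∏_{j<m} Γ(x + j/m) = (2π)^((m-1)/2) m^(1/2 - m x) Γ(m x)`. The latter follows from the
Bohr–Mollerup theorem: `f y = (2π)^(-(m-1)/2) m^(y - 1/2) ∏_{j<m} Γ((y + j)/m)` is log-convex,
satisfies `f (y + 1) = y f y`, and `f 1 = 1` by the reflection formula together with
`∏_{k=1}^{m-1} 2 sin (π k / m) = m`; hence `f = Γ`. Each Gamma integral equals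
`Γ(s) / (2^K m ξ)^s`, and the product of these `Γ(s)` telescopes by Legendre's duplication
formula to `Γ(2^K m ξ) / Γ(m ξ)` times powers of `2` and `π`. After substituting, all Gamma
values cancel and the remaining powers of `2`, `π`, `m`, `ξ` and `e` match exponent by exponent.
-/

open Real MeasureTheory Finset

namespace Real

theorem integral_Ioo_rpow_mul_one_sub_rpow {a b : ℝ} (ha : 0 < a) (hb : 0 < b) :
    ∫ x in Set.Ioo (0 : ℝ) 1, x ^ (a - 1) * (1 - x) ^ (b - 1) =
      Gamma a * Gamma b / Gamma (a + b) := by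
  have h := Complex.betaIntegral_eq_Gamma_mul_div a b (by simpa) (by simpa)
  rw [Complex.betaIntegral, intervalIntegral.integral_of_le zero_le_one,
    ← Complex.ofReal_add] at h
  simp only [Complex.Gamma_ofReal] at h
  rw [← integral_Ioc_eq_integral_Ioo, ← Complex.ofReal_inj]
  push_cast
  rw [← h]
  refine integral_ofReal.symm.trans <|
    setIntegral_congr_fun measurableSet_Ioc fun x ⟨hx0, hx1⟩ ↦ ?_
  norm_cast
  rw [← Complex.ofReal_cpow hx0.le, ← Complex.ofReal_cpow (sub_nonneg.2 hx1)]
  exact Complex.ofReal_mul _ _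

theorem Gamma_mul_prod_Gamma_two_pow_mul_add_half (a : ℝ) (K : ℕ) :
    Gamma a * ∏ k ∈ range K, Gamma (2 ^ k * a + 1 / 2) =
      Gamma (2 ^ K * a) * 2 ^ (K - (2 ^ (K + 1) - 2) * a) * √π ^ K := by
  induction K with
  | zero => simp
  | succ K ih =>
    calc Gamma a * ∏ k ∈ range (K + 1), Gamma (2 ^ k * a + 1 / 2)
        = Gamma (2 ^ K * a) * Gamma (2 ^ K * a + 1 / 2) * 2 ^ (K - (2 ^ (K + 1) - 2) * a) *
            √π ^ K := by
          rw [prod_range_succ, ← mul_assoc, ih]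
          ring
      _ = Gamma (2 ^ (K + 1) * a) *
            (2 ^ (1 - 2 * (2 ^ K * a)) * 2 ^ (K - (2 ^ (K + 1) - 2) * a)) * √π ^ (K + 1) := by
          rw [Gamma_mul_Gamma_add_half, pow_succ' _ K, ← mul_assoc]
          ring
      _ = _ := by
          rw [← rpow_add two_pos]
          push_cast
          ring_nf

theorem prod_Icc_integral_rpow_mul_exp_neg_mul {c : ℝ} (hc : 0 < c) (K : ℕ) :
    ∏ k ∈ Icc 1 K, ∫ t in Set.Ioi (0 : ℝ),
        t ^ (2 ^ (k - 1) * c + 1 / 2 - 1) * exp (-t * (2 ^ K * c)) =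
      Gamma (2 ^ K * c) / Gamma c * 2 ^ (K - (2 ^ (K + 1) - 2) * c) * √π ^ K /
        (2 ^ K * c) ^ ((2 ^ K - 1) * c + K / 2) := by
  have hsum : ∑ k ∈ range K, ((2 : ℝ) ^ k * c + 1 / 2) = (2 ^ K - 1) * c + K / 2 := by
    rw [sum_add_distrib, ← sum_mul, geom_sum_eq (by norm_num : (2 : ℝ) ≠ 1), sum_const,
      card_range, nsmul_eq_mul]
    ring
  have hΓ := Gamma_mul_prod_Gamma_two_pow_mul_add_half c K
  have hint : ∀ k, ∫ t in Set.Ioi (0 : ℝ), t ^ (2 ^ k * c + 1 / 2 - 1) * exp (-t * (2 ^ K * c)) =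
      Gamma (2 ^ k * c + 1 / 2) / (2 ^ K * c) ^ (2 ^ k * c + 1 / 2) := fun k ↦ by
    have h := integral_rpow_mul_exp_neg_mul_Ioi (a := 2 ^ k * c + 1 / 2) (r := 2 ^ K * c)
      (by positivity) (by positivity)
    rw [div_rpow zero_le_one (by positivity), one_rpow, one_div_mul_eq_div] at h
    exact (setIntegral_congr_fun measurableSet_Ioi fun t _ ↦ by ring_nf).trans h
  rw [← Finset.Ico_add_one_right_eq_Icc, prod_Ico_eq_prod_range, Nat.add_sub_cancel]
  simp only [Nat.add_sub_cancel_left, hint]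
  rw [prod_div_distrib, ← rpow_sum_of_pos (by positivity), hsum]
  congr 1
  rw [div_mul_eq_mul_div, div_mul_eq_mul_div, eq_div_iff (Gamma_pos_of_pos hc).ne', mul_comm, hΓ]

theorem prod_two_mul_sin_pi_mul_div (n : ℕ) :
    ∏ k ∈ range n, 2 * sin (π * (k + 1) / (n + 1)) = n + 1 := by
  have h := congrArg (‖·‖)
    (Complex.isPrimitiveRoot_exp (n + 1) n.succ_ne_zero).prod_one_sub_pow_eq_order
  simp only [norm_prod] at h
  rw [← Nat.cast_succ, Complex.norm_natCast] at h
  push_cast at h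
  refine (prod_congr rfl fun k hk ↦ ?_).trans h
  have hk : (k : ℝ) + 1 ≤ n + 1 := by exact_mod_cast Nat.succ_le_succ (mem_range.1 hk).le
  rw [← Complex.exp_nat_mul, norm_sub_rev,
    show ((k + 1 : ℕ) : ℂ) * (2 * π * Complex.I / (n + 1)) =
      Complex.I * ((2 * π * (k + 1) / (n + 1) : ℝ) : ℂ) by push_cast; ring,
    Complex.norm_exp_I_mul_ofReal_sub_one, Real.norm_eq_abs, abs_of_nonneg]
  · ring_nf
  refine mul_nonneg zero_le_two (sin_nonneg_of_nonneg_of_le_pi (by positivity) ?_)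
  rw [div_div, div_le_iff₀ (by positivity)]
  nlinarith [pi_pos]

theorem sq_prod_Gamma_succ_div (n : ℕ) :
    (∏ k ∈ range n, Gamma ((k + 1) / (n + 1))) ^ 2 = (2 * π) ^ n / (n + 1) := by
  have hreflect : ∏ k ∈ range n, Gamma (1 - (k + 1) / (n + 1)) =
      ∏ k ∈ range n, Gamma ((k + 1) / (n + 1)) := by
    rw [← prod_range_reflect]
    refine prod_congr rfl fun k hk ↦ congrArg Gamma ?_
    rw [Nat.sub_sub, Nat.cast_sub (by simpa [add_comm] using mem_range.1 hk)]
    field_simp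
    push_cast
    ring
  calc (∏ k ∈ range n, Gamma ((k + 1) / (n + 1))) ^ 2
      = ∏ k ∈ range n, Gamma ((k + 1) / (n + 1)) * Gamma (1 - (k + 1) / (n + 1)) := by
        rw [sq, prod_mul_distrib, hreflect]
    _ = ∏ k ∈ range n, π / sin (π * (k + 1) / (n + 1)) := by
        simp only [Gamma_mul_Gamma_one_sub, mul_div_assoc]
    _ = (2 * π) ^ n / ∏ k ∈ range n, 2 * sin (π * (k + 1) / (n + 1)) := by
        rw [prod_div_distrib, prod_mul_distrib, prod_const, prod_const, card_range, mul_pow,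
          mul_div_mul_left _ _ (by positivity)]
    _ = (2 * π) ^ n / (n + 1) := by rw [prod_two_mul_sin_pi_mul_div]

theorem convexOn_log_Gamma_add_div {c d : ℝ} (hc : 0 < c) (hd : 0 ≤ d) :
    ConvexOn ℝ (Set.Ioi 0) fun y ↦ log (Gamma ((y + d) / c)) := by
  let g : ℝ →ᵃ[ℝ] ℝ := ⟨fun y ↦ (y + d) / c, c⁻¹ • LinearMap.id, fun y v ↦ by
    simp only [vadd_eq_add, LinearMap.smul_apply, LinearMap.id_apply, smul_eq_mul]; ring⟩
  exact (convexOn_log_Gamma.comp_affineMap g).subset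
    (fun y (hy : 0 < y) ↦ show 0 < (y + d) / c by positivity) (convex_Ioi 0)

noncomputable def gaussProduct (m : ℕ) (y : ℝ) : ℝ :=
  (∏ j ∈ range m, Gamma ((y + j) / m)) * m ^ (y - 1 / 2) / (2 * π) ^ (((m : ℝ) - 1) / 2)

variable {m : ℕ}

theorem gaussProduct_pos (hm : 0 < m) {y : ℝ} (hy : 0 < y) : 0 < gaussProduct m y := by
  unfold gaussProduct
  have := prod_pos fun j (_ : j ∈ range m) ↦ Gamma_pos_of_pos (show 0 < (y + j) / m by positivity)
  positivity

theorem gaussProduct_add_one (hm : 0 < m) {y : ℝ} (hy : 0 < y) :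
    gaussProduct m (y + 1) = y * gaussProduct m y := by
  set g : ℕ → ℝ := fun j ↦ Gamma ((y + j) / m)
  have hm' : (0 : ℝ) < m := by exact_mod_cast hm
  have hg : g m = y / m * g 0 := by
    simp only [g, Nat.cast_zero, add_zero]
    rw [add_div, div_self hm'.ne', Gamma_add_one (by positivity)]
  have hshift : ∏ j ∈ range m, g (j + 1) = y / m * ∏ j ∈ range m, g j := by
    have h := (prod_range_succ' g m).symm.trans (prod_range_succ g m)
    rw [hg, ← mul_assoc, mul_comm (∏ j ∈ range m, g j)] at h
    exact mul_right_cancel₀ (Gamma_pos_of_pos (by positivity)).ne' h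
  have hprod : ∏ j ∈ range m, Gamma ((y + 1 + j) / m) = ∏ j ∈ range m, g (j + 1) := by
    refine prod_congr rfl fun j _ ↦ ?_
    simp only [g, Nat.cast_succ, add_assoc, add_comm (1 : ℝ)]
  rw [gaussProduct, gaussProduct, hprod, hshift, show y + 1 - 1 / 2 = y - 1 / 2 + 1 by ring,
    rpow_add_one hm'.ne']
  simp only [g]
  field_simp

theorem gaussProduct_one (hm : 0 < m) : gaussProduct m 1 = 1 := by
  obtain ⟨n, rfl⟩ : ∃ n, m = n + 1 := ⟨m - 1, by omega⟩
  refine (pow_eq_one_iff_of_nonneg (gaussProduct_pos hm one_pos).le two_ne_zero).1 ?_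
  have hprod : ∏ j ∈ range (n + 1), Gamma ((1 + j) / (n + 1 : ℕ)) =
      ∏ k ∈ range n, Gamma ((k + 1) / (n + 1)) := by
    rw [prod_range_succ, Nat.cast_succ, add_comm (1 : ℝ), div_self (by positivity), Gamma_one,
      mul_one]
    simp only [add_comm (1 : ℝ)]
  rw [gaussProduct, hprod, div_pow, mul_pow, sq_prod_Gamma_succ_div, ← rpow_natCast _ 2,
    ← rpow_natCast _ 2, ← rpow_mul (by positivity), ← rpow_mul (by positivity)]
  push_cast
  rw [show (n + 1 - 1 : ℝ) / 2 * 2 = n by ring, show (1 - 1 / 2 : ℝ) * 2 = 1 by norm_num,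
    rpow_natCast, rpow_one]
  field_simp

theorem convexOn_log_gaussProduct (hm : 0 < m) :
    ConvexOn ℝ (Set.Ioi 0) (log ∘ gaussProduct m) := by
  have hm' : (0 : ℝ) < m := by exact_mod_cast hm
  have hsum : ConvexOn ℝ (Set.Ioi 0) fun y ↦ ∑ j ∈ range m, log (Gamma ((y + j) / m)) := by
    have := sum_induction (s := range m) (fun (j : ℕ) (y : ℝ) ↦ log (Gamma ((y + j) / m)))
      (ConvexOn ℝ (Set.Ioi 0)) (fun _ _ ↦ ConvexOn.add) (convexOn_const 0 (convex_Ioi 0))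
      fun j _ ↦ convexOn_log_Gamma_add_div hm' j.cast_nonneg
    rwa [sum_fn] at this
  have hlin := (convexOn_id (convex_Ioi (0 : ℝ))).smul (log_nonneg (Nat.one_le_cast.2 hm))
  refine ((hsum.add hlin).add_const (-(1 / 2 * log m) - ((m : ℝ) - 1) / 2 * log (2 * π))).congr
    fun y (hy : 0 < y) ↦ ?_
  have hΓ : ∀ j ∈ range m, Gamma ((y + j) / m) ≠ 0 :=
    fun j _ ↦ (Gamma_pos_of_pos (by positivity)).ne'
  simp only [Function.comp_apply, gaussProduct, Pi.add_apply, id, smul_eq_mul]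
  rw [log_div (mul_ne_zero (prod_ne_zero_iff.2 hΓ) (by positivity)) (by positivity),
    log_mul (prod_ne_zero_iff.2 hΓ) (by positivity), log_prod hΓ, log_rpow hm',
    log_rpow (by positivity)]
  ring

theorem prod_Gamma_add_div (hm : 0 < m) {x : ℝ} (hx : 0 < x) :
    ∏ j ∈ range m, Gamma (x + j / m) =
      (2 * π) ^ (((m : ℝ) - 1) / 2) * m ^ (1 / 2 - m * x) * Gamma (m * x) := by
  have hm' : (0 : ℝ) < m := by exact_mod_cast hm
  have h := eq_Gamma_of_log_convex (convexOn_log_gaussProduct hm) (gaussProduct_add_one hm)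
    (gaussProduct_pos hm) (gaussProduct_one hm) (show m * x ∈ Set.Ioi 0 from mul_pos hm' hx)
  have hprod : ∏ j ∈ range m, Gamma ((m * x + j) / m) = ∏ j ∈ range m, Gamma (x + j / m) :=
    prod_congr rfl fun j _ ↦ by field_simp
  rw [gaussProduct, hprod, div_eq_iff (by positivity)] at h
  rw [show 1 / 2 - m * x = -(m * x - 1 / 2) by ring, rpow_neg hm'.le, mul_right_comm,
    ← div_eq_mul_inv, eq_div_iff (by positivity), h, mul_comm]

variable {ξ : ℝ}

theorem Gamma_mul_prod_Icc_Gamma_add_sub_one_div (hm : 0 < m) (hξ : 0 < ξ) :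
    Gamma ξ * ∏ j ∈ Icc 2 m, Gamma (ξ + ((j : ℝ) - 1) / m) =
      (2 * π) ^ (((m : ℝ) - 1) / 2) * m ^ (1 / 2 - m * ξ) * Gamma (m * ξ) := by
  obtain ⟨n, rfl⟩ : ∃ n, m = n + 1 := ⟨m - 1, by omega⟩
  rw [← prod_Gamma_add_div hm hξ, prod_range_succ', ← Finset.Ico_add_one_right_eq_Icc,
    prod_Ico_eq_prod_range, mul_comm, show n + 1 + 1 - 2 = n by omega]
  simp only [Nat.cast_zero, zero_div, add_zero]
  congr 1
  refine prod_congr rfl fun i _ ↦ ?_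
  push_cast
  ring_nf

theorem prod_Icc_integral_rpow_mul_one_sub_rpow (hm : 0 < m) (hξ : 0 < ξ) :
    ∏ j ∈ Icc 2 m, ∫ ρ in Set.Ioo (0 : ℝ) 1,
        ρ ^ (ξ + ((j : ℝ) - 1) / m - 1) * (1 - ρ) ^ (((m : ℝ) - j + 1) / m - 1) =
      (2 * π) ^ (((m : ℝ) - 1) / 2) * m ^ (1 / 2 - m * ξ) * Gamma (m * ξ) *
        (∏ j ∈ Icc 2 m, Gamma (((m : ℝ) - j + 1) / m)) / (ξ ^ (m - 1) * Gamma ξ ^ m) := by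
  have hm' : (0 : ℝ) < m := by exact_mod_cast hm
  have hint : ∀ j ∈ Icc 2 m, ∫ ρ in Set.Ioo (0 : ℝ) 1,
      ρ ^ (ξ + ((j : ℝ) - 1) / m - 1) * (1 - ρ) ^ (((m : ℝ) - j + 1) / m - 1) =
        Gamma (ξ + ((j : ℝ) - 1) / m) * Gamma (((m : ℝ) - j + 1) / m) / Gamma (ξ + 1) := by
    intro j hj
    obtain ⟨h2j, hjm⟩ : (2 : ℝ) ≤ j ∧ (j : ℝ) ≤ m := by exact_mod_cast mem_Icc.1 hj
    rw [integral_Ioo_rpow_mul_one_sub_rpow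
      (add_pos_of_pos_of_nonneg hξ (div_nonneg (by linarith) hm'.le)) (div_pos (by linarith) hm')]
    congr 2
    field_simp
    ring
  obtain ⟨n, rfl⟩ : ∃ n, m = n + 1 := ⟨m - 1, by omega⟩
  rw [prod_congr rfl hint, prod_div_distrib, prod_mul_distrib, prod_const, Nat.card_Icc,
    Gamma_add_one hξ.ne', ← Gamma_mul_prod_Icc_Gamma_add_sub_one_div hm hξ,
    show n + 1 + 1 - 2 = n by omega, Nat.add_sub_cancel, pow_succ']
  field_simp
  ring

end Real

theorem stmt_8 (m : ℕ) (hm : 0 < m) (K : ℕ) (ξ : ℝ) (hξ : 0 < ξ) :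
    1 / (Real.Gamma ξ) ^ m =
      (((2 : ℝ) ^ K * (m : ℝ) / (2 * π)) ^ ((K : ℝ) / 2) /
          ((2 * π) ^ (((m : ℝ) - 1) / 2) *
            ∏ j ∈ Finset.Icc 2 m, Real.Gamma (((m : ℝ) - (j : ℝ) + 1) / (m : ℝ)))) *
        (1 / ξ ^ ((m : ℝ) * ξ)) * ξ ^ ((m : ℝ) + (K : ℝ) / 2 + 1 / 2 - 1) *
        Real.exp ((2 : ℝ) ^ K * (m : ℝ) * ξ) *
        (2 : ℝ) ^ ((2 * ((2 : ℝ) ^ K - 1) - (K : ℝ)) * (m : ℝ) * ξ) *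
        (∏ j ∈ Finset.Icc 2 m,
          ∫ ρ in Set.Ioo (0 : ℝ) 1,
            ρ ^ (ξ + ((j : ℝ) - 1) / (m : ℝ) - 1) *
              (1 - ρ) ^ (((m : ℝ) - (j : ℝ) + 1) / (m : ℝ) - 1)) *
        (∏ k ∈ Finset.Icc 1 K,
          ∫ t in Set.Ioi (0 : ℝ),
            t ^ ((2 : ℝ) ^ (k - 1) * (m : ℝ) * ξ + 1 / 2 - 1) *
              Real.exp (-t * ((2 : ℝ) ^ K * (m : ℝ) * ξ))) *
        (((2 : ℝ) ^ K * (m : ℝ) * ξ) ^ ((2 : ℝ) ^ K * (m : ℝ) * ξ - 1 / 2) /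
          (Real.Gamma ((2 : ℝ) ^ K * (m : ℝ) * ξ) *
            Real.exp ((2 : ℝ) ^ K * (m : ℝ) * ξ))) := by
  have hm' : (0 : ℝ) < m := by exact_mod_cast hm
  have hassoc : ∀ k : ℕ, (2 : ℝ) ^ k * m * ξ = 2 ^ k * (m * ξ) := fun k ↦ mul_assoc _ _ _
  simp only [hassoc]
  rw [prod_Icc_integral_rpow_mul_one_sub_rpow hm hξ, prod_Icc_integral_rpow_mul_exp_neg_mul (by positivity)]
  have hD : 0 < ∏ j ∈ Icc 2 m, Gamma (((m : ℝ) - j + 1) / m) :=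
    prod_pos fun j hj ↦ Gamma_pos_of_pos <| div_pos (by
      have : (j : ℝ) ≤ m := by exact_mod_cast (mem_Icc.1 hj).2
      linarith) hm'
  field_simp
  rw [← rpow_natCast ξ (m - 1), Nat.cast_sub hm, ← rpow_natCast √π K]
  simp (disch := positivity) only [rpow_def_of_pos, log_mul, log_div, log_pow, log_sqrt, ← exp_add]
  congr 1
  push_cast
  ring
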